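/- arXiv:2401.06685 — 3 statements merged into one kernel-verified Lean document; each statement's English description precedes it below -/
import Mathlib

section
/- Let 0 < ℓ ≤ n be integers and let H be a set of intervals that is ℓ-powerful in (0,n) and minimal (with respect to inclusion) with this property. Then, writing H in standard form as {(a_i, b_i) : 1 ≤ i ≤ t}, for all i, j ∈ {1,…,t} with j ≥ i+2 we have a_j ≥ b_i − ℓ + 2. -/
/-- `p` captures `q`: intervals `p = (a,b)`, `q = (c,d)` with `a ≤ c ≤ d ≤ b`. -/
def Captures (p q : ℤ × ℤ) : Prop := p.1 ≤ q.1 ∧ q.1 ≤ q.2 ∧ q.2 ≤ p.2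

/-- `H` is `ℓ`-powerful in `(0,n)`. -/
def Powerful (ℓ n : ℤ) (H : Finset (ℤ × ℤ)) : Prop :=
  (∀ p ∈ H, 0 ≤ p.1 ∧ p.1 ≤ p.2 ∧ p.2 ≤ n) ∧
  ∀ h : ℤ, 0 ≤ h → h + ℓ ≤ n → ∃ p ∈ H, Captures p (h, h + ℓ)

/-- `H = {(a_i, b_i) : 1 ≤ i ≤ t}` in standard form (strictly increasing `a`'s and `b`'s). -/
def StdForm (H : Finset (ℤ × ℤ)) (t : ℕ) (a b : ℕ → ℤ) : Prop :=
  (∀ i j : ℕ, 1 ≤ i → i < j → j ≤ t → a i < a j ∧ b i < b j) ∧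
  H = (Finset.Icc 1 t).image fun i => (a i, b i)

/-- `H` is minimally `ℓ`-powerful in `(0,n)`. -/
def MinPowerful (ℓ n : ℤ) (H : Finset (ℤ × ℤ)) : Prop :=
  Powerful ℓ n H ∧ ∀ H' ⊆ H, Powerful ℓ n H' → H' = H

theorem stmt_0 (ℓ n : ℤ) (h0 : 0 < ℓ) (hn : ℓ ≤ n) (H : Finset (ℤ × ℤ))
    (hmin : MinPowerful ℓ n H) (t : ℕ) (a b : ℕ → ℤ) (hsf : StdForm H t a b) :
    ∀ i j : ℕ, 1 ≤ i → j ≤ t → i + 2 ≤ j → b i - ℓ + 2 ≤ a j := by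
  intro i j hi hj hij
  by_contra hcon
  push_neg at hcon
  -- so a j ≤ b i - ℓ + 1
  have haj : a j + ℓ - 1 ≤ b i := by linarith
  set k := i + 1 with hk
  have hik : i < k := Nat.lt_succ_self i
  have hkj : k < j := by omega
  have hkt : k ≤ t := by omega
  have hit : i ≤ t := by omega
  have h1i : (1 : ℕ) ≤ i := hi
  have hmono_ik := hsf.1 i k hi hik hkt
  have hmono_kj := hsf.1 k j (by omega) hkj hj
  have hmem : ∀ m : ℕ, 1 ≤ m → m ≤ t → (a m, b m) ∈ H := by
    intro m hm1 hm2
    rw [hsf.2]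
    exact Finset.mem_image.mpr ⟨m, Finset.mem_Icc.mpr ⟨hm1, hm2⟩, rfl⟩
  have hkmem : (a k, b k) ∈ H := hmem k (by omega) hkt
  have himem : (a i, b i) ∈ H := hmem i hi hit
  have hjmem : (a j, b j) ∈ H := hmem j (by omega) hj
  set H' := H.erase (a k, b k) with hH'
  have hsub : H' ⊆ H := Finset.erase_subset _ _
  have hpow : Powerful ℓ n H' := by
    constructor
    · intro p hp; exact hmin.1.1 p (hsub hp)
    · intro h hh hhn
      obtain ⟨p, hpH, hcap⟩ := hmin.1.2 h hh hhn
      by_cases hpk : p = (a k, b k)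
      · subst hpk
        obtain ⟨c1, c2, c3⟩ := hcap
        simp only at c1 c3
        by_cases hcase : a j ≤ h
        · refine ⟨(a j, b j), ?_, hcase, c2, ?_⟩
          · apply Finset.mem_erase.mpr
            refine ⟨?_, hjmem⟩
            intro heq
            have : a j = a k := congrArg Prod.fst heq
            linarith [hmono_kj.1]
          · simp only; linarith [hmono_kj.2]
        · push_neg at hcase
          refine ⟨(a i, b i), ?_, ?_, c2, ?_⟩
          · apply Finset.mem_erase.mpr
            refine ⟨?_, himem⟩
            intro heq
            have : a i = a k := congrArg Prod.fst heq
            linarith [hmono_ik.1]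
          · simp only; linarith [hmono_ik.1]
          · simp only
            have : h + 1 ≤ a j := hcase
            linarith
      · exact ⟨p, Finset.mem_erase.mpr ⟨hpk, hpH⟩, hcap⟩
  have : H' = H := hmin.2 H' hsub hpow
  have : (a k, b k) ∈ H' := this ▸ hkmem
  exact (Finset.mem_erase.mp this).1 rfl
end

section
/- If the coarse Menger conjecture holds for d = 3 and some fixed value of k (with separation constant ℓ), then it holds for that k and every d ≥ 3, with separation constant d·ℓ. Precisely: suppose for all graphs G and S,T ⊆ V(G), either there are k paths between S and T pairwise at distance (in G) at least 3, or there is a set X of at most k−1 vertices such that every S–T path contains a vertex at distance at most ℓ from X. Then for every d ≥ 3, every graph G, and all S,T ⊆ V(G), either there are k paths between S and T pairwise at distance at least d in G, or there is a set X of at most k−1 vertices such that every S–T path in G contains a vertex at distance at most d·ℓ from X in G. -/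
/-- The distance in `G` between vertex sets `A` and `B` is at least `d`:
every walk from `A` to `B` has length at least `d`. -/
def SetDistGE {V : Type} (G : SimpleGraph V) (A B : Set V) (d : ℕ) : Prop :=
  ∀ ⦃x y : V⦄, x ∈ A → y ∈ B → ∀ w : G.Walk x y, d ≤ w.length

/-- The distance in `G` between `x` and `y` is at most `ℓ`. -/
def DistLE {V : Type} (G : SimpleGraph V) (x y : V) (ℓ : ℕ) : Prop :=
  ∃ w : G.Walk x y, w.length ≤ ℓ

/-- `P` is the vertex set of a path of `G` with one end in `S` and one end in `T`. -/
def IsSTPath {V : Type} (G : SimpleGraph V) (S T : Set V) (P : Set V) : Prop :=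
  ∃ (u v : V) (w : G.Walk u v), w.IsPath ∧ u ∈ S ∧ v ∈ T ∧ P = {x | x ∈ w.support}

/-- There are `k` paths between `S` and `T`, pairwise at distance at least `d`. -/
def HasKPaths {V : Type} (G : SimpleGraph V) (S T : Set V) (k d : ℕ) : Prop :=
  ∃ P : Fin k → Set V, (∀ i, IsSTPath G S T (P i)) ∧
    ∀ i j, i ≠ j → SetDistGE G (P i) (P j) d

/-- There is a set `X` of at most `m` vertices such that every path between `S` and `T`
contains a vertex with distance at most `ℓ` from some member of `X`. -/
def CoarseSeparator {V : Type} (G : SimpleGraph V) (S T : Set V) (m ℓ : ℕ) : Prop :=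
  ∃ X : Finset V, X.card ≤ m ∧
    ∀ (u v : V) (w : G.Walk u v), w.IsPath → u ∈ S → v ∈ T →
      ∃ y ∈ w.support, ∃ x ∈ X, DistLE G x y ℓ


/-!
Apply the `d = 3` case to the power `G^m`, `m = d - 1`, in which adjacency means distance at
most `m` in `G`. A `G`-walk of length at most `m * n` contracts to a `G^m`-walk of length at
most `n`, and a `G^m`-walk of length `n` expands to a `G`-walk of length at most `m * n` each
of whose vertices lies within `m / 2` of a vertex of the original walk. Hence a separator of
`G^m` at distance `ℓ` is one of `G` at distance `m * ℓ`; and if two expanded paths were at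
`G`-distance at most `m`, their underlying `G^m`-paths would be joined by a `G`-walk of length
at most `m / 2 + m + m / 2 ≤ 2 * m`, i.e. they would be at `G^m`-distance at most `2 < 3`.
-/

open SimpleGraph

variable {V : Type} {G : SimpleGraph V}

lemma DistLE.symm {x y : V} {ℓ : ℕ} (h : DistLE G x y ℓ) : DistLE G y x ℓ :=
  let ⟨w, hw⟩ := h
  ⟨w.reverse, by simpa using hw⟩

lemma DistLE.mono {x y : V} {ℓ ℓ' : ℕ} (h : DistLE G x y ℓ) (hℓ : ℓ ≤ ℓ') : DistLE G x y ℓ' :=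
  let ⟨w, hw⟩ := h
  ⟨w, hw.trans hℓ⟩

lemma SimpleGraph.Walk.distLE_half_length_of_mem_support {u v x : V} (q : G.Walk u v)
    (hx : x ∈ q.support) : DistLE G u x (q.length / 2) ∨ DistLE G x v (q.length / 2) := by
  classical
  have hlen : (q.takeUntil x hx).length + (q.dropUntil x hx).length = q.length := by
    rw [← Walk.length_append, Walk.take_spec]
  by_cases h : (q.takeUntil x hx).length ≤ q.length / 2
  · exact Or.inl ⟨_, h⟩
  · exact Or.inr ⟨q.dropUntil x hx, by omega⟩

namespace SimpleGraph

def power (G : SimpleGraph V) (m : ℕ) : SimpleGraph V where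
  Adj x y := x ≠ y ∧ DistLE G x y m
  symm := ⟨fun _ _ h => ⟨h.1.symm, h.2.symm⟩⟩
  loopless := ⟨fun _ h => h.1 rfl⟩

variable {m : ℕ}

@[simp]
lemma power_adj {x y : V} : (G.power m).Adj x y ↔ x ≠ y ∧ DistLE G x y m :=
  Iff.rfl

lemma le_power (hm : 1 ≤ m) : G ≤ G.power m :=
  fun _ _ h => power_adj.2 ⟨h.ne, h.toWalk, by simpa using hm⟩

lemma exists_walk_of_power_walk {u v : V} (w : (G.power m).Walk u v) :
    ∃ W : G.Walk u v, W.length ≤ m * w.length ∧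
      ∀ x ∈ W.support, ∃ a ∈ w.support, DistLE G a x (m / 2) := by
  induction w with
  | nil => exact ⟨.nil, by simp, fun x hx => ⟨x, hx, .nil, by simp⟩⟩
  | cons h w ih =>
    obtain ⟨q, hq⟩ := (power_adj.1 h).2
    obtain ⟨W, hWlen, hW⟩ := ih
    refine ⟨q.append W, by rw [Walk.length_append, Walk.length_cons, Nat.mul_succ]; omega,
      fun x hx => ?_⟩
    rcases (Walk.mem_support_append_iff q W).1 hx with hx | hx
    · rcases q.distLE_half_length_of_mem_support hx with h' | h'
      · exact ⟨_, by simp, h'.mono (by omega)⟩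
      · exact ⟨_, by simp, h'.symm.mono (by omega)⟩
    · obtain ⟨a, ha, hax⟩ := hW x hx
      exact ⟨a, by simp [ha], hax⟩

end SimpleGraph

lemma DistLE.of_power {u v : V} {m n : ℕ} (h : DistLE (G.power m) u v n) :
    DistLE G u v (m * n) :=
  let ⟨w, hw⟩ := h
  let ⟨W, hW, _⟩ := exists_walk_of_power_walk w
  ⟨W, hW.trans (Nat.mul_le_mul_left m hw)⟩

lemma DistLE.power_one {u v : V} {m : ℕ} (h : DistLE G u v m) : DistLE (G.power m) u v 1 := by
  by_cases huv : u = v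
  · subst huv
    exact ⟨.nil, by simp⟩
  · exact ⟨(power_adj.2 ⟨huv, h⟩).toWalk, by simp⟩

lemma DistLE.to_power {u v : V} {m n : ℕ} (h : DistLE G u v (m * n)) :
    DistLE (G.power m) u v n := by
  induction n generalizing u with
  | zero =>
    obtain ⟨p, hp⟩ := h
    obtain rfl := p.eq_of_length_eq_zero (by simpa using hp)
    exact ⟨.nil, le_rfl⟩
  | succ n ih =>
    obtain ⟨p, hp⟩ := h
    rw [Nat.mul_succ] at hp
    obtain ⟨w₁, hw₁⟩ := DistLE.power_one ⟨p.take m, (p.take_length m).trans_le (min_le_left _ _)⟩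
    obtain ⟨w₂, hw₂⟩ := ih ⟨p.drop m, by rw [Walk.drop_length]; omega⟩
    exact ⟨w₁.append w₂, by simp only [Walk.length_append]; omega⟩

lemma HasKPaths.of_power {S T : Set V} {k m : ℕ} (h : HasKPaths (G.power m) S T k 3) :
    HasKPaths G S T k (m + 1) := by
  obtain ⟨P, hP, hdist⟩ := h
  classical
  choose u v w _ hu hv hPw using hP
  choose W _ hW using fun i => exists_walk_of_power_walk (w i)
  refine ⟨fun i => {x | x ∈ (W i).bypass.support},
    fun i => ⟨u i, v i, _, (W i).bypass_isPath, hu i, hv i, rfl⟩, fun i j hij x y hx hy p => ?_⟩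
  obtain ⟨a, ha, g, hg⟩ := hW i x ((W i).support_bypass_subset_support hx)
  obtain ⟨b, hb, g', hg'⟩ := hW j y ((W j).support_bypass_subset_support hy)
  by_contra! hp
  have hab : DistLE G a b (m * 2) := ⟨g.append (p.append g'.reverse), by
    simp only [Walk.length_append, Walk.length_reverse]; omega⟩
  obtain ⟨w', hw'⟩ := hab.to_power
  have := hdist i j hij (hPw i ▸ ha) (hPw j ▸ hb) w'
  omega

lemma CoarseSeparator.mono {S T : Set V} {r ℓ ℓ' : ℕ} (h : CoarseSeparator G S T r ℓ)
    (hℓ : ℓ ≤ ℓ') : CoarseSeparator G S T r ℓ' :=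
  let ⟨X, hX, hsep⟩ := h
  ⟨X, hX, fun u v p hp hu hv =>
    let ⟨y, hy, x, hx, hxy⟩ := hsep u v p hp hu hv
    ⟨y, hy, x, hx, hxy.mono hℓ⟩⟩

lemma CoarseSeparator.of_power {S T : Set V} {r m ℓ : ℕ} (hm : 1 ≤ m)
    (h : CoarseSeparator (G.power m) S T r ℓ) : CoarseSeparator G S T r (m * ℓ) := by
  classical
  obtain ⟨X, hX, hsep⟩ := h
  refine ⟨X, hX, fun u v p _ hu hv => ?_⟩
  obtain ⟨y, hy, x, hx, hxy⟩ :=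
    hsep u v (p.mapLe (le_power hm)).bypass (Walk.bypass_isPath _) hu hv
  refine ⟨y, ?_, x, hx, hxy.of_power⟩
  simpa [Walk.mapLe] using (p.mapLe _).support_bypass_subset_support hy

theorem stmt_6_general (k ℓ : ℕ)
    (h3 : ∀ (V : Type) (G : SimpleGraph V) (S T : Set V),
      HasKPaths G S T k 3 ∨ CoarseSeparator G S T (k - 1) ℓ) :
    ∀ d : ℕ, 3 ≤ d → ∀ (V : Type) (G : SimpleGraph V) (S T : Set V),
      HasKPaths G S T k d ∨ CoarseSeparator G S T (k - 1) (d * ℓ) := by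
  intro d hd V G S T
  obtain ⟨m, rfl⟩ : ∃ m, d = m + 1 := ⟨d - 1, by omega⟩
  exact (h3 V (G.power m) S T).imp HasKPaths.of_power
    fun h => (h.of_power (by omega)).mono (Nat.mul_le_mul_right ℓ m.le_succ)

/-- If the coarse Menger conjecture holds for `d = 3` and `k` (with constant `ℓ`),
then it holds for the same `k` and every `d ≥ 3`, with constant `d * ℓ`. -/
theorem stmt_6 (k ℓ : ℕ) (hk : 1 ≤ k)
    (h3 : ∀ (V : Type) (G : SimpleGraph V) (S T : Set V),
      HasKPaths G S T k 3 ∨ CoarseSeparator G S T (k - 1) ℓ) :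
    ∀ d : ℕ, 3 ≤ d → ∀ (V : Type) (G : SimpleGraph V) (S T : Set V),
      HasKPaths G S T k d ∨ CoarseSeparator G S T (k - 1) (d * ℓ) :=
  stmt_6_general k ℓ h3
end

section
/- Let ℓ ≥ 1, and let G be the graph obtained from the counterexample construction: a uniform binary tree of depth greater than 2ℓ+2 with root r, with the edges incident to the set Z (leaves plus two extra vertices joined in a bottom path M) subdivided into paths of length greater than 2ℓ. Let S consist of r together with the two leftmost vertices of M, and T consist of r together with the two rightmost vertices of M. Then for every X ⊆ V(G) with |X| ≤ 2, there is a path P between S and T with d(X, P) > ℓ. -/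
namespace CoarseMenger9

/-- Nodes of the uniform binary tree of depth `k`: lists of booleans of length at most
`k - 1` (the root is `[]`, leaves have length `k - 1`). -/
abbrev Node (k : ℕ) := {l : List Bool // l.length ≤ k - 1}

/-- Tree nodes together with the two extra vertices of the bottom path `M`. -/
abbrev Vk (k : ℕ) := Node k ⊕ Bool

/-- The node at depth `d` with index `m` in left-to-right order
(most significant bit first in the root-to-node list). -/
def bits (d m : ℕ) : List Bool := (List.range d).map fun j => m.testBit (d - 1 - j)

/-- The `q`-th vertex of the bottom path `M` (0-indexed), in the arrangement of
Figure 1/2: the two extra vertices sit at positions `1` and `2^(k-1)`, and the two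
children of the `p`-th depth-`(k-2)` node sit at positions `2p` and `2p+3`. -/
def mnode (k : ℕ) (hk : 2 ≤ k) (q : ℕ) : Vk k :=
  if q = 1 then Sum.inr false
  else if q = 2 ^ (k - 1) then Sum.inr true
  else if q % 2 = 0 then
    Sum.inl ⟨bits (k - 2) (q / 2) ++ [false], by simp [bits]; omega⟩
  else
    Sum.inl ⟨bits (k - 2) ((q - 3) / 2) ++ [true], by simp [bits]; omega⟩

/-- The edges of `G_k` incident with `Z`, i.e. the edges to be subdivided:
leaf-to-parent tree edges, and the `2^(k-1) + 1` edges of the bottom path `M`. -/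
abbrev E (k : ℕ) := {l : List Bool // l.length = k - 1} ⊕ Fin (2 ^ (k - 1) + 1)

/-- The two endpoints of a subdivided edge. -/
def ep (k : ℕ) (hk : 2 ≤ k) : E k → Vk k × Vk k
  | Sum.inl l =>
      (Sum.inl ⟨l.1.dropLast, by have := l.2; simp only [List.length_dropLast]; omega⟩,
       Sum.inl ⟨l.1, le_of_eq l.2⟩)
  | Sum.inr i => (mnode k hk i, mnode k hk ((i : ℕ) + 1))

/-- Vertices of the subdivided graph: original vertices, plus `len e - 1` interior
vertices on the subdividing path replacing each edge `e` (which gets length `len e`). -/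
abbrev SV (k : ℕ) (len : E k → ℕ) := Vk k ⊕ (Σ e : E k, Fin (len e - 1))

/-- Base adjacency of the graph of Figure 1: internal tree edges (both ends non-leaves)
kept; each edge `e` incident with `Z` replaced by a path of length `len e` through its
interior vertices. -/
def baseAdj (k : ℕ) (hk : 2 ≤ k) (len : E k → ℕ) : SV k len → SV k len → Prop
  | Sum.inl (Sum.inl l), Sum.inl (Sum.inl l') =>
      (∃ b : Bool, l'.1 = l.1 ++ [b]) ∧ l'.1.length ≤ k - 2
  | Sum.inl u, Sum.inr ⟨e, j⟩ =>
      ((j : ℕ) = 0 ∧ u = (ep k hk e).1) ∨ ((j : ℕ) = len e - 2 ∧ u = (ep k hk e).2)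
  | Sum.inr ⟨e, j⟩, Sum.inr ⟨e', j'⟩ => e = e' ∧ (j' : ℕ) = (j : ℕ) + 1
  | _, _ => False

/-- The graph of Figure 1. -/
def G (k : ℕ) (hk : 2 ≤ k) (len : E k → ℕ) : SimpleGraph (SV k len) :=
  SimpleGraph.fromRel (baseAdj k hk len)

def root (k : ℕ) (hk : 2 ≤ k) (len : E k → ℕ) : SV k len :=
  Sum.inl (Sum.inl ⟨[], by simp⟩)

/-- `S`: the root together with the two leftmost vertices of `M`. -/
def S (k : ℕ) (hk : 2 ≤ k) (len : E k → ℕ) : Set (SV k len) :=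
  {root k hk len, Sum.inl (mnode k hk 0), Sum.inl (mnode k hk 1)}

/-- `T`: the root together with the two rightmost vertices of `M`. -/
def T (k : ℕ) (hk : 2 ≤ k) (len : E k → ℕ) : Set (SV k len) :=
  {root k hk len, Sum.inl (mnode k hk (2 ^ (k - 1))),
    Sum.inl (mnode k hk (2 ^ (k - 1) + 1))}

-- CHUNK2 --


def val (l : List Bool) : ℕ := l.foldl (fun n b => 2 * n + cond b 1 0) 0

lemma foldl_val (l : List Bool) (n : ℕ) :
    l.foldl (fun n b => 2 * n + cond b 1 0) n = n * 2 ^ l.length + val l := by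
  induction l generalizing n with
  | nil => simp [val]
  | cons b t ih =>
      simp only [List.foldl_cons, List.length_cons, val] at *
      rw [ih, ih (2 * 0 + cond b 1 0)]
      ring

lemma val_cons (b : Bool) (l : List Bool) :
    val (b :: l) = (cond b 1 0) * 2 ^ l.length + val l := by
  have h : val (b :: l) = l.foldl (fun n b => 2 * n + cond b 1 0) (2 * 0 + cond b 1 0) := rfl
  rw [h, foldl_val]
  ring

lemma val_lt (l : List Bool) : val l < 2 ^ l.length := by
  induction l with
  | nil => simp [val]
  | cons b t ih =>
      rw [val_cons]
      cases b <;> simp [pow_succ] <;> omega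

lemma bits_length (d m : ℕ) : (bits d m).length = d := by simp [bits]

lemma bits_succ (d m : ℕ) : bits (d+1) m = m.testBit d :: bits d m := by
  simp only [bits, List.range_succ_eq_map, List.map_cons, List.map_map]
  refine congrArg₂ _ (by first | rfl | (congr 1; omega)) ?_
  apply List.map_congr_left
  intro a _
  simp only [Function.comp_apply]
  congr 1
  omega

lemma val_bits (d m : ℕ) : val (bits d m) = m % 2 ^ d := by
  induction d generalizing m with
  | zero => simp [bits, val, Nat.mod_one]
  | succ d ih =>
      rw [bits_succ, val_cons, bits_length, ih]
      have h2 : m % 2 ^ (d+1) = 2 ^ d * (m / 2 ^ d % 2) + m % 2 ^ d := by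
        rw [Nat.mod_pow_succ]; ring
      have ht := Nat.testBit_eq_decide_div_mod_eq (i := d) (x := m)
      cases h : m.testBit d <;> rw [h] at ht <;> simp at ht
      · have h0 : m / 2 ^ d % 2 = 0 := by omega
        rw [h0] at h2
        simp
        omega
      · rw [ht] at h2
        simp
        omega

lemma val_bits_of_lt {d m : ℕ} (h : m < 2 ^ d) : val (bits d m) = m := by
  rw [val_bits, Nat.mod_eq_of_lt h]

def posL (l : List Bool) : ℕ :=
  match l.getLast? with
  | some false => 2 * val l.dropLast
  | some true => 2 * val l.dropLast + 3
  | none => 0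

lemma posL_concat_false (l : List Bool) : posL (l ++ [false]) = 2 * val l := by
  simp [posL, List.getLast?_concat]

lemma posL_concat_true (l : List Bool) : posL (l ++ [true]) = 2 * val l + 3 := by
  simp [posL, List.getLast?_concat]

lemma posL_bits_false {d p : ℕ} (h : p < 2 ^ d) : posL (bits d p ++ [false]) = 2 * p := by
  rw [posL_concat_false, val_bits_of_lt h]

lemma posL_bits_true {d p : ℕ} (h : p < 2 ^ d) : posL (bits d p ++ [true]) = 2 * p + 3 := by
  rw [posL_concat_true, val_bits_of_lt h]

lemma posL_le {l : List Bool} {d : ℕ} (h : l.length ≤ d + 1) : posL l ≤ 2 ^ (d+1) + 1 := by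
  have h1 : val l.dropLast < 2 ^ l.dropLast.length := val_lt _
  have h2 : l.dropLast.length ≤ d := by simp [List.length_dropLast]; omega
  have h3 : (2:ℕ) ^ l.dropLast.length ≤ 2 ^ d := Nat.pow_le_pow_right (by norm_num) h2
  have h5 : (1:ℕ) ≤ 2 ^ d := Nat.one_le_two_pow
  have hp : (2:ℕ) ^ (d+1) = 2 * 2 ^ d := by rw [pow_succ]; ring
  unfold posL
  rcases l.getLast? with _ | b
  · positivity
  · cases b <;> simp <;> omega


section Main

variable (ℓ k : ℕ) (hk : 2 ≤ k) (len : E k → ℕ)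

def D : ℕ := k + 2 * ℓ - 1

def hgt : SV k len → ℕ
  | Sum.inl (Sum.inl l) => if l.1.length < k - 1 then l.1.length else D ℓ k
  | Sum.inl (Sum.inr _) => D ℓ k
  | Sum.inr ⟨Sum.inl _, j⟩ => min (k - 2 + 1 + (j : ℕ)) (D ℓ k)
  | Sum.inr ⟨Sum.inr _, _⟩ => D ℓ k

def mu : SV k len → ℕ
  | Sum.inl (Sum.inl l) => (2 * ℓ + 1) * posL l.1
  | Sum.inl (Sum.inr b) => (2 * ℓ + 1) * (cond b (2 ^ (k - 1)) 1)
  | Sum.inr ⟨Sum.inl e, _⟩ => (2 * ℓ + 1) * posL e.1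
  | Sum.inr ⟨Sum.inr i, j⟩ => (2 * ℓ + 1) * (i : ℕ) + min ((j : ℕ) + 1) (2 * ℓ + 1)

lemma pow_km1 (hk : 2 ≤ k) : 2 ^ (k - 1) = 2 * 2 ^ (k - 2) := by
  have h1 : k - 1 = (k - 2) + 1 := by omega
  rw [h1, pow_succ]
  ring

lemma hgt_mnode (q : ℕ) : hgt ℓ k len (Sum.inl (mnode k hk q)) = D ℓ k := by
  unfold mnode
  split_ifs with h1 h2 h3
  · rfl
  · rfl
  · simp only [hgt]
    rw [if_neg (by simp [bits_length]; omega)]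
  · simp only [hgt]
    rw [if_neg (by simp [bits_length]; omega)]

lemma mu_mnode (q : ℕ) (hq : q ≤ 2 ^ (k - 1) + 1) :
    mu ℓ k len (Sum.inl (mnode k hk q)) = (2 * ℓ + 1) * q := by
  have hp : 2 ^ (k - 1) = 2 * 2 ^ (k - 2) := pow_km1 k hk
  unfold mnode
  split_ifs with h1 h2 h3
  · simp [mu, h1]
  · simp [mu, h2]
  · have hlt : q / 2 < 2 ^ (k - 2) := by omega
    simp only [mu]
    rw [posL_bits_false hlt]
    congr 1
    omega
  · have hlt : (q - 3) / 2 < 2 ^ (k - 2) := by omega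
    simp only [mu]
    rw [posL_bits_true hlt]
    congr 1
    omega

include hk in
lemma mu_le (v : SV k len) : mu ℓ k len v ≤ (2 * ℓ + 1) * (2 ^ (k - 1) + 1) := by
  have hp : 2 ^ (k - 1) = 2 * 2 ^ (k - 2) := pow_km1 k hk
  rcases v with (l | b) | ⟨e, j⟩
  · have := posL_le (l := l.1) (d := k - 2) (by have := l.2; omega)
    simp only [mu]
    exact Nat.mul_le_mul_left _ (by omega)
  · simp only [mu]
    apply Nat.mul_le_mul_left
    cases b <;> simp <;> omega
  · rcases e with L | i
    · have := posL_le (l := L.1) (d := k - 2) (by have := L.2; omega)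
      simp only [mu]
      exact Nat.mul_le_mul_left _ (by omega)
    · simp only [mu]
      have h1 : (i : ℕ) + 1 ≤ 2 ^ (k - 1) + 1 := by have := i.2; omega
      have h2 := Nat.mul_le_mul_left (2 * ℓ + 1) h1
      have h3 : (2 * ℓ + 1) * ((i : ℕ) + 1) = (2 * ℓ + 1) * (i : ℕ) + (2 * ℓ + 1) := by ring
      omega

variable {ℓ k len}

lemma hgt_adj (hdepth : 2 * ℓ + 2 < k) (hlen : ∀ e, 2 * ℓ < len e)
    {u v : SV k len} (h : baseAdj k hk len u v) :
    hgt ℓ k len u ≤ hgt ℓ k len v + 1 ∧ hgt ℓ k len v ≤ hgt ℓ k len u + 1 := by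
  have hD : D ℓ k = k + 2 * ℓ - 1 := rfl
  rcases u with (l | b) | ⟨e, j⟩ <;> rcases v with (l' | b') | ⟨e', j'⟩ <;>
      simp only [baseAdj] at h <;> try exact h.elim
  · -- tree-tree
    obtain ⟨⟨b, hb⟩, hle⟩ := h
    have h1 : l'.1.length = l.1.length + 1 := by rw [hb]; simp
    simp only [hgt]
    rw [if_pos (by omega), if_pos (by omega)]
    omega
  · -- tree node ~ interior
    rcases h with ⟨hj, hu⟩ | ⟨hj, hu⟩
    · rw [show (Sum.inl (Sum.inl l) : SV k len) = Sum.inl (ep k hk e').1 from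
        congrArg Sum.inl hu]
      rcases e' with L | i
      · simp only [ep, hgt]
        rw [if_pos (by simp only [List.length_dropLast, L.2]; omega)]
        simp only [List.length_dropLast, L.2, hj]
        omega
      · rw [show (ep k hk (Sum.inr i)).1 = mnode k hk (i : ℕ) from rfl, hgt_mnode]
        simp only [hgt]
        omega
    · rw [show (Sum.inl (Sum.inl l) : SV k len) = Sum.inl (ep k hk e').2 from
        congrArg Sum.inl hu]
      rcases e' with L | i
      · have hL := hlen (Sum.inl L)
        simp only [ep, hgt]
        rw [if_neg (by rw [L.2]; omega)]
        simp only [hj]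
        omega
      · rw [show (ep k hk (Sum.inr i)).2 = mnode k hk ((i : ℕ) + 1) from rfl, hgt_mnode]
        simp only [hgt]
        omega
  · -- extra ~ interior
    rcases e' with L | i
    · rcases h with ⟨hj, hu⟩ | ⟨hj, hu⟩ <;> simp [ep] at hu
    · simp only [hgt]
      omega
  · -- interior-interior
    obtain ⟨he, hj⟩ := h
    subst he
    rcases e with L | i <;> simp only [hgt, hj] <;> omega

lemma mu_adj (hdepth : 2 * ℓ + 2 < k) (hlen : ∀ e, 2 * ℓ < len e)
    {u v : SV k len} (h : baseAdj k hk len u v)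
    (hu : k - 1 ≤ hgt ℓ k len u) (hv : k - 1 ≤ hgt ℓ k len v) :
    mu ℓ k len u ≤ mu ℓ k len v + 1 ∧ mu ℓ k len v ≤ mu ℓ k len u + 1 := by
  have hD : D ℓ k = k + 2 * ℓ - 1 := rfl
  rcases u with (l | b) | ⟨e, j⟩ <;> rcases v with (l' | b') | ⟨e', j'⟩ <;>
      simp only [baseAdj] at h <;> try exact h.elim
  · -- tree-tree : impossible since hgt v small
    exfalso
    obtain ⟨⟨b, hb⟩, hle⟩ := h
    simp only [hgt] at hv
    rw [if_pos (by omega)] at hv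
    omega
  · -- tree node ~ interior
    rcases h with ⟨hj, hu'⟩ | ⟨hj, hu'⟩
    · rcases e' with L | i
      · -- u is the parent: hgt u = k - 2, contradiction
        exfalso
        rw [show (Sum.inl (Sum.inl l) : SV k len) = Sum.inl (ep k hk (Sum.inl L)).1 from
          congrArg Sum.inl hu'] at hu
        simp only [ep, hgt] at hu
        rw [if_pos (by simp only [List.length_dropLast, L.2]; omega)] at hu
        simp only [List.length_dropLast, L.2] at hu
        omega
      · rw [show (Sum.inl (Sum.inl l) : SV k len) = Sum.inl (ep k hk (Sum.inr i)).1 from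
          congrArg Sum.inl hu',
          show (ep k hk (Sum.inr i)).1 = mnode k hk (i : ℕ) from rfl]
        rw [mu_mnode ℓ k hk len (i : ℕ) (by have := i.2; omega)]
        simp only [mu, hj]
        omega
    · rcases e' with L | i
      · rw [show (Sum.inl (Sum.inl l) : SV k len) = Sum.inl (ep k hk (Sum.inl L)).2 from
          congrArg Sum.inl hu']
        simp only [ep, mu]
        omega
      · rw [show (Sum.inl (Sum.inl l) : SV k len) = Sum.inl (ep k hk (Sum.inr i)).2 from
          congrArg Sum.inl hu',
          show (ep k hk (Sum.inr i)).2 = mnode k hk ((i : ℕ) + 1) from rfl]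
        rw [mu_mnode ℓ k hk len ((i : ℕ) + 1) (by have := i.2; omega)]
        have hL := hlen (Sum.inr i)
        simp only [mu, hj]
        have h1 : (2 * ℓ + 1) * ((i : ℕ) + 1) = (2 * ℓ + 1) * (i : ℕ) + (2 * ℓ + 1) := by ring
        omega
  · -- extra ~ interior
    rcases e' with L | i
    · rcases h with ⟨hj, hu'⟩ | ⟨hj, hu'⟩ <;> simp [ep] at hu'
    · rcases h with ⟨hj, hu'⟩ | ⟨hj, hu'⟩
      · rw [show (Sum.inl (Sum.inr b) : SV k len) = Sum.inl (ep k hk (Sum.inr i)).1 from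
          congrArg Sum.inl hu',
          show (ep k hk (Sum.inr i)).1 = mnode k hk (i : ℕ) from rfl]
        rw [mu_mnode ℓ k hk len (i : ℕ) (by have := i.2; omega)]
        simp only [mu, hj]
        omega
      · rw [show (Sum.inl (Sum.inr b) : SV k len) = Sum.inl (ep k hk (Sum.inr i)).2 from
          congrArg Sum.inl hu',
          show (ep k hk (Sum.inr i)).2 = mnode k hk ((i : ℕ) + 1) from rfl]
        rw [mu_mnode ℓ k hk len ((i : ℕ) + 1) (by have := i.2; omega)]
        have hL := hlen (Sum.inr i)
        simp only [mu, hj]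
        have h1 : (2 * ℓ + 1) * ((i : ℕ) + 1) = (2 * ℓ + 1) * (i : ℕ) + (2 * ℓ + 1) := by ring
        omega
  · -- interior-interior
    obtain ⟨he, hj⟩ := h
    subst he
    rcases e with L | i <;> simp only [mu, hj] <;> omega

lemma hgt_Gadj (hdepth : 2 * ℓ + 2 < k) (hlen : ∀ e, 2 * ℓ < len e)
    {u v : SV k len} (h : (G k hk len).Adj u v) :
    hgt ℓ k len u ≤ hgt ℓ k len v + 1 ∧ hgt ℓ k len v ≤ hgt ℓ k len u + 1 := by
  rw [G, SimpleGraph.fromRel_adj] at h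
  rcases h.2 with h' | h'
  · exact hgt_adj hk hdepth hlen h'
  · exact (hgt_adj hk hdepth hlen h').symm

lemma mu_Gadj (hdepth : 2 * ℓ + 2 < k) (hlen : ∀ e, 2 * ℓ < len e)
    {u v : SV k len} (h : (G k hk len).Adj u v)
    (hu : k - 1 ≤ hgt ℓ k len u) (hv : k - 1 ≤ hgt ℓ k len v) :
    mu ℓ k len u ≤ mu ℓ k len v + 1 ∧ mu ℓ k len v ≤ mu ℓ k len u + 1 := by
  rw [G, SimpleGraph.fromRel_adj] at h
  rcases h.2 with h' | h'
  · exact mu_adj hk hdepth hlen h' hu hv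
  · exact (mu_adj hk hdepth hlen h' hv hu).symm

lemma walk_est (hdepth : 2 * ℓ + 2 < k) (hlen : ∀ e, 2 * ℓ < len e)
    {u v : SV k len} (w : (G k hk len).Walk u v) :
    (hgt ℓ k len u ≤ hgt ℓ k len v + w.length ∧ hgt ℓ k len v ≤ hgt ℓ k len u + w.length) ∧
    (k - 1 + w.length ≤ hgt ℓ k len u →
      (mu ℓ k len u ≤ mu ℓ k len v + w.length ∧ mu ℓ k len v ≤ mu ℓ k len u + w.length)) := by
  induction w with
  | nil => simp
  | @cons a x c hadj w ih =>
      obtain ⟨ih1, ih2⟩ := ih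
      have h1 := hgt_Gadj hk hdepth hlen hadj
      simp only [SimpleGraph.Walk.length_cons]
      constructor
      · omega
      · intro hu
        have hx : k - 1 + w.length ≤ hgt ℓ k len x := by omega
        have h2 := mu_Gadj hk hdepth hlen hadj (by omega) (by omega)
        have h3 := ih2 hx
        omega


lemma adj_chain {e : E k} {j j' : ℕ} (hj : j < len e - 1) (hj' : j' < len e - 1)
    (h : j' = j + 1) :
    (G k hk len).Adj (Sum.inr ⟨e, ⟨j, hj⟩⟩) (Sum.inr ⟨e, ⟨j', hj'⟩⟩) := by
  rw [G, SimpleGraph.fromRel_adj]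
  refine ⟨?_, Or.inl ⟨rfl, by simp [h]⟩⟩
  intro hc
  simp only [Sum.inr.injEq, Sigma.mk.inj_iff, heq_eq_eq, true_and] at hc
  rw [Fin.ext_iff] at hc
  simp at hc
  omega

lemma adj_start {e : E k} (h0 : 0 < len e - 1) :
    (G k hk len).Adj (Sum.inl (ep k hk e).1) (Sum.inr ⟨e, ⟨0, h0⟩⟩) := by
  rw [G, SimpleGraph.fromRel_adj]
  exact ⟨by simp, Or.inl (by simp [baseAdj])⟩

lemma adj_end {e : E k} {j : ℕ} (hj : j < len e - 1) (h : j = len e - 2) :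
    (G k hk len).Adj (Sum.inr ⟨e, ⟨j, hj⟩⟩) (Sum.inl (ep k hk e).2) := by
  rw [G, SimpleGraph.fromRel_adj]
  exact ⟨by simp, Or.inr (by simp [baseAdj, h])⟩

def chain (e : E k) : (fuel : ℕ) → (j : ℕ) → (hj : j < len e - 1) →
    (hf : len e - 1 = j + 1 + fuel) →
    (G k hk len).Walk (Sum.inr ⟨e, ⟨j, hj⟩⟩) (Sum.inl (ep k hk e).2)
  | 0, j, hj, hf => SimpleGraph.Walk.cons (adj_end hk hj (by omega)) SimpleGraph.Walk.nil
  | fuel+1, j, hj, hf =>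
      SimpleGraph.Walk.cons (adj_chain hk hj (by omega) rfl)
        (chain e fuel (j+1) (by omega) (by omega))

lemma chain_support (e : E k) (fuel : ℕ) : ∀ (j : ℕ) (hj : j < len e - 1)
    (hf : len e - 1 = j + 1 + fuel), ∀ y ∈ (chain hk e fuel j hj hf).support,
    y = Sum.inl (ep k hk e).2 ∨ ∃ t : Fin (len e - 1), y = Sum.inr ⟨e, t⟩ := by
  induction fuel with
  | zero =>
      intro j hj hf y hy
      simp only [chain, SimpleGraph.Walk.support_cons, SimpleGraph.Walk.support_nil,
        List.mem_cons, List.mem_singleton] at hy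
      rcases hy with h | h | h
      · exact Or.inr ⟨_, h⟩
      · exact Or.inl h
      · exact absurd h List.not_mem_nil
  | succ n ih =>
      intro j hj hf y hy
      simp only [chain, SimpleGraph.Walk.support_cons, List.mem_cons] at hy
      rcases hy with h | h
      · exact Or.inr ⟨_, h⟩
      · exact ih (j+1) (by omega) (by omega) y h

def edgeWalk (e : E k) (h2 : 2 ≤ len e) :
    (G k hk len).Walk (Sum.inl (ep k hk e).1) (Sum.inl (ep k hk e).2) :=
  SimpleGraph.Walk.cons (adj_start hk (by omega))
    (chain hk e (len e - 2) 0 (by omega) (by omega))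

lemma edgeWalk_support (e : E k) (h2 : 2 ≤ len e) :
    ∀ y ∈ (edgeWalk hk e h2).support,
    y = Sum.inl (ep k hk e).1 ∨ y = Sum.inl (ep k hk e).2 ∨
      ∃ t : Fin (len e - 1), y = Sum.inr ⟨e, t⟩ := by
  intro y hy
  simp only [edgeWalk, SimpleGraph.Walk.support_cons, List.mem_cons] at hy
  rcases hy with h | h
  · exact Or.inl h
  · rcases chain_support hk e _ _ _ _ y h with h' | h'
    · exact Or.inr (Or.inl h')
    · exact Or.inr (Or.inr h')

def mseg (hlen2 : ∀ e, 2 ≤ len e) : (d : ℕ) → (a : ℕ) → (hb : a + d ≤ 2 ^ (k-1) + 1) →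
    (G k hk len).Walk (Sum.inl (mnode k hk a)) (Sum.inl (mnode k hk (a + d)))
  | 0, a, hb => SimpleGraph.Walk.nil
  | d+1, a, hb =>
      SimpleGraph.Walk.append
        (edgeWalk hk (Sum.inr ⟨a, by omega⟩) (hlen2 _))
        ((mseg hlen2 d (a+1) (by omega)).copy rfl
          (by rw [show a + 1 + d = a + (d+1) from by omega]))

lemma mseg_support (hlen2 : ∀ e, 2 ≤ len e) (d : ℕ) : ∀ (a : ℕ)
    (hb : a + d ≤ 2 ^ (k-1) + 1), ∀ y ∈ (mseg hk hlen2 d a hb).support,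
    (∃ q : ℕ, a ≤ q ∧ q ≤ a + d ∧ y = Sum.inl (mnode k hk q)) ∨
    (∃ (i : Fin (2 ^ (k-1) + 1)) (t : Fin (len (Sum.inr i) - 1)),
      a ≤ (i : ℕ) ∧ (i : ℕ) < a + d ∧ y = Sum.inr ⟨Sum.inr i, t⟩) := by
  induction d with
  | zero =>
      intro a hb y hy
      simp only [mseg, SimpleGraph.Walk.support_nil, List.mem_singleton] at hy
      exact Or.inl ⟨a, le_refl a, by omega, hy⟩
  | succ n ih =>
      intro a hb y hy
      simp only [mseg, SimpleGraph.Walk.support_append, SimpleGraph.Walk.support_copy,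
        List.mem_append] at hy
      erw [SimpleGraph.Walk.support_append, SimpleGraph.Walk.support_copy, List.mem_append] at hy
      rcases hy with h | h
      · rcases edgeWalk_support hk _ _ y h with h' | h' | h'
        · exact Or.inl ⟨a, le_refl a, by omega, h'⟩
        · exact Or.inl ⟨a + 1, by omega, by omega, h'⟩
        · obtain ⟨t, ht⟩ := h'
          exact Or.inr ⟨⟨a, by omega⟩, t, by show a ≤ a; omega, by show a < a + (n+1); omega, ht⟩
      · have h2 := ih (a+1) (by omega) y (List.mem_of_mem_tail h)
        rcases h2 with ⟨q, h3, h4, h5⟩ | ⟨i, t, h3, h4, h5⟩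
        · exact Or.inl ⟨q, by omega, by omega, h5⟩
        · exact Or.inr ⟨i, t, by omega, by omega, h5⟩

end Main

variable (k : ℕ) (hk : 2 ≤ k)

def leafL (p : ℕ) : {l : List Bool // l.length = k - 1} :=
  ⟨bits (k-2) p ++ [false], by simp [bits_length]; omega⟩

def leafR (p : ℕ) : {l : List Bool // l.length = k - 1} :=
  ⟨bits (k-2) p ++ [true], by simp [bits_length]; omega⟩

lemma mnode_eq_leafL (p : ℕ) (hp : p < 2 ^ (k-2)) :
    mnode k hk (2*p) = (ep k hk (Sum.inl (leafL k hk p))).2 := by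
  have hp2 : 2 ^ (k-1) = 2 * 2 ^ (k-2) := pow_km1 k hk
  unfold mnode
  rw [if_neg (by omega), if_neg (by omega), if_pos (by omega)]
  have hls : bits (k-2) (2*p/2) ++ [false] = (leafL k hk p).1 := by
    show _ = bits (k-2) p ++ [false]
    rw [show 2*p/2 = p from by omega]
  exact congrArg Sum.inl (Subtype.ext hls)

lemma mnode_eq_leafR (p : ℕ) (hp : p < 2 ^ (k-2)) :
    mnode k hk (2*p+3) = (ep k hk (Sum.inl (leafR k hk p))).2 := by
  have hp2 : 2 ^ (k-1) = 2 * 2 ^ (k-2) := pow_km1 k hk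
  unfold mnode
  rw [if_neg (by omega), if_neg (by omega), if_neg (by omega)]
  have hls : bits (k-2) ((2*p+3-3)/2) ++ [true] = (leafR k hk p).1 := by
    show _ = bits (k-2) p ++ [true]
    rw [show (2*p+3-3)/2 = p from by omega]
  exact congrArg Sum.inl (Subtype.ext hls)

lemma parent_eq (p : ℕ) :
    (ep k hk (Sum.inl (leafR k hk p))).1 = (ep k hk (Sum.inl (leafL k hk p))).1 := by
  show Sum.inl _ = Sum.inl _
  congr 1
  apply Subtype.ext
  show (bits (k-2) p ++ [true]).dropLast = (bits (k-2) p ++ [false]).dropLast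
  rw [List.dropLast_concat, List.dropLast_concat]

variable {len : E k → ℕ}

def crossW (hlen2 : ∀ e, 2 ≤ len e) (p : ℕ) (hp : p < 2 ^ (k-2)) :
    (G k hk len).Walk (Sum.inl (mnode k hk (2*p))) (Sum.inl (mnode k hk (2*p+3))) :=
  (((edgeWalk hk (Sum.inl (leafL k hk p)) (hlen2 _)).reverse.append
    ((edgeWalk hk (Sum.inl (leafR k hk p)) (hlen2 _)).copy
      (congrArg Sum.inl (parent_eq k hk p)) rfl)).copy
    (congrArg Sum.inl (mnode_eq_leafL k hk p hp)).symm
    (congrArg Sum.inl (mnode_eq_leafR k hk p hp)).symm)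

lemma crossW_support (hlen2 : ∀ e, 2 ≤ len e) (p : ℕ) (hp : p < 2 ^ (k-2)) :
    ∀ y ∈ (crossW k hk hlen2 p hp).support,
    y = Sum.inl (ep k hk (Sum.inl (leafL k hk p))).1 ∨
    y = Sum.inl (mnode k hk (2*p)) ∨ y = Sum.inl (mnode k hk (2*p+3)) ∨
    (∃ t, y = Sum.inr ⟨Sum.inl (leafL k hk p), t⟩) ∨
    (∃ t, y = Sum.inr ⟨Sum.inl (leafR k hk p), t⟩) := by
  intro y hy
  simp only [crossW, SimpleGraph.Walk.support_copy, SimpleGraph.Walk.support_append,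
    SimpleGraph.Walk.support_reverse, List.mem_append] at hy
  rcases hy with h | h
  · rw [List.mem_reverse] at h
    rcases edgeWalk_support hk _ _ y h with h' | h' | h'
    · exact Or.inl h'
    · exact Or.inr (Or.inl (by rw [h', ← mnode_eq_leafL k hk p hp]))
    · exact Or.inr (Or.inr (Or.inr (Or.inl h')))
  · have h2 := List.mem_of_mem_tail h
    rcases edgeWalk_support hk _ _ y h2 with h' | h' | h'
    · exact Or.inl (by rw [h', parent_eq k hk p])
    · exact Or.inr (Or.inr (Or.inl (by rw [h', ← mnode_eq_leafR k hk p hp])))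
    · exact Or.inr (Or.inr (Or.inr (Or.inr h')))

lemma hgt_parent (ℓ : ℕ) (L : {l : List Bool // l.length = k - 1}) :
    hgt ℓ k len (Sum.inl (ep k hk (Sum.inl L)).1) = k - 2 := by
  simp only [ep, hgt]
  rw [if_pos (by simp only [List.length_dropLast, L.2]; omega)]
  simp only [List.length_dropLast, L.2]
  omega


lemma mul_succ_le (a : ℕ) {q r : ℕ} (h : q < r) : a * q + a ≤ a * r := by
  have h2 := Nat.mul_le_mul_left a (show q + 1 ≤ r from h)
  rw [Nat.mul_succ] at h2
  exact h2

lemma no_short_walk {ℓ k : ℕ} (hk : 2 ≤ k) {len : E k → ℕ}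
    (hdepth : 2*ℓ + 2 < k) (hlen : ∀ e, 2*ℓ < len e) {x y : SV k len}
    (hcase : (2*ℓ + 1 ≤ hgt ℓ k len y ∧ hgt ℓ k len x ≤ ℓ) ∨
      (k + ℓ - 1 ≤ hgt ℓ k len x ∧
        (hgt ℓ k len y + ℓ < hgt ℓ k len x ∨ mu ℓ k len y + ℓ < mu ℓ k len x ∨
          mu ℓ k len x + ℓ < mu ℓ k len y))) :
    ¬ ∃ w : (G k hk len).Walk x y, w.length ≤ ℓ := by
  rintro ⟨w, hw⟩
  have h1 := (walk_est hk hdepth hlen w).1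
  rcases hcase with ⟨hy, hx⟩ | ⟨hx, hy⟩
  · omega
  · rcases hy with hy | hy
    · omega
    · have h2 := (walk_est hk hdepth hlen w).2 (by omega)
      omega

lemma hgt_root (ℓ k : ℕ) (hk : 2 ≤ k) (len : E k → ℕ) :
    hgt ℓ k len (root k hk len) = 0 := by
  simp only [root, hgt, List.length_nil]
  rw [if_pos (by omega)]

theorem stmt_9' (ℓ k : ℕ) (hl : 1 ≤ ℓ) (hdepth : 2 * ℓ + 2 < k) (hk : 2 ≤ k)
    (len : E k → ℕ) (hlen : ∀ e, 2 * ℓ < len e) :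
    ∀ X : Finset (SV k len), X.card ≤ 2 →
      ∃ (u v : SV k len) (p : (G k hk len).Walk u v), p.IsPath ∧
        u ∈ S k hk len ∧ v ∈ T k hk len ∧
        ∀ x ∈ X, ∀ y ∈ p.support, ¬ ∃ w : (G k hk len).Walk x y, w.length ≤ ℓ := by
  intro X hX
  classical
  have hlen2 : ∀ e, 2 ≤ len e := fun e => by have := hlen e; omega
  have hDval : D ℓ k = k + 2*ℓ - 1 := rfl
  have hp2 : 2 ^ (k-1) = 2 * 2 ^ (k-2) := pow_km1 k hk
  by_cases hA : ∀ x ∈ X, ℓ + 1 ≤ hgt ℓ k len x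
  · -- nil path at the root
    refine ⟨root k hk len, root k hk len, SimpleGraph.Walk.nil, SimpleGraph.Walk.IsPath.nil,
      Set.mem_insert _ _, Set.mem_insert _ _, ?_⟩
    intro x hx y hy
    simp only [SimpleGraph.Walk.support_nil, List.mem_singleton] at hy
    subst hy
    rintro ⟨w, hw⟩
    have h1 := (walk_est hk hdepth hlen w).1
    rw [hgt_root] at h1
    have := hA x hx
    omega
  by_cases hB : ∀ x ∈ X, hgt ℓ k len x < k + ℓ - 1
  · -- the full path along M
    obtain ⟨w0, hw0⟩ : ∃ w0 : (G k hk len).Walk (Sum.inl (mnode k hk 0))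
        (Sum.inl (mnode k hk (2^(k-1)+1))),
        ∀ y ∈ w0.support, hgt ℓ k len y = D ℓ k := by
      refine ⟨(mseg hk hlen2 (2^(k-1)+1) 0 (by omega)).copy rfl (by rw [Nat.zero_add]), ?_⟩
      intro y hy
      rw [SimpleGraph.Walk.support_copy] at hy
      rcases mseg_support hk hlen2 _ _ _ y hy with ⟨q, _, _, rfl⟩ | ⟨i, t, _, _, rfl⟩
      · exact hgt_mnode ℓ k hk len q
      · rfl
    refine ⟨Sum.inl (mnode k hk 0), Sum.inl (mnode k hk (2^(k-1)+1)), w0.bypass,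
      SimpleGraph.Walk.bypass_isPath w0,
      Set.mem_insert_iff.mpr (Or.inr (Set.mem_insert _ _)),
      Set.mem_insert_iff.mpr (Or.inr (Set.mem_insert_iff.mpr (Or.inr rfl))), ?_⟩
    intro x hx y hy
    have hgty := hw0 y (SimpleGraph.Walk.support_bypass_subset w0 hy)
    rintro ⟨w, hw⟩
    have h1 := (walk_est hk hdepth hlen w).1
    have := hB x hx
    omega
  · -- main case: one vertex near the root, one near M
    push_neg at hA hB
    obtain ⟨x1, hx1X, hx1⟩ := hA
    obtain ⟨x2, hx2X, hx2⟩ := hB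
    have hx12 : x1 ≠ x2 := by
      intro h
      rw [h] at hx1
      omega
    have hXeq : ∀ x ∈ X, x = x1 ∨ x = x2 := by
      intro x hx
      by_contra hc
      push_neg at hc
      have hsub : ({x1, x2, x} : Finset (SV k len)) ⊆ X := by
        intro z hz
        simp only [Finset.mem_insert, Finset.mem_singleton] at hz
        rcases hz with rfl | rfl | rfl <;> assumption
      have hcard : ({x1, x2, x} : Finset (SV k len)).card = 3 := by
        rw [Finset.card_insert_of_notMem (by
              simp only [Finset.mem_insert, Finset.mem_singleton]
              push_neg
              exact ⟨hx12, fun h => hc.1 h.symm⟩),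
            Finset.card_insert_of_notMem (by
              simp only [Finset.mem_singleton]
              exact fun h => hc.2 h.symm),
            Finset.card_singleton]
      have := Finset.card_le_card hsub
      omega
    set m := mu ℓ k len x2 with hm
    -- find the blocked position q1
    have hKey : ∃ q1, q1 ≤ 2^(k-1)+1 ∧ (2*ℓ+1)*q1 ≤ m + ℓ ∧ m ≤ (2*ℓ+1)*q1 + ℓ := by
      have hdm := Nat.div_add_mod m (2*ℓ+1)
      have hmod : m % (2*ℓ+1) < 2*ℓ+1 := Nat.mod_lt _ (by omega)
      have hmle : m ≤ (2*ℓ+1) * (2^(k-1)+1) := mu_le ℓ k hk len x2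
      have hq0N : m / (2*ℓ+1) ≤ 2^(k-1)+1 := by
        calc m / (2*ℓ+1) ≤ (2*ℓ+1) * (2^(k-1)+1) / (2*ℓ+1) := Nat.div_le_div_right hmle
        _ = 2^(k-1)+1 := Nat.mul_div_cancel_left _ (by omega)
      by_cases hsp : m % (2*ℓ+1) ≤ ℓ
      · exact ⟨m / (2*ℓ+1), hq0N, by omega, by omega⟩
      · have hmul : (2*ℓ+1) * (m / (2*ℓ+1) + 1)
            = (2*ℓ+1) * (m / (2*ℓ+1)) + (2*ℓ+1) := by ring
        refine ⟨m / (2*ℓ+1) + 1, ?_, by omega, by omega⟩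
        by_contra hq0'
        have hq0'' : m / (2*ℓ+1) = 2^(k-1)+1 := by omega
        rw [hq0''] at hdm
        omega
    obtain ⟨q1, hq1N, hm1, hm2⟩ := hKey
    -- generic safety of a vertex whose μ-interval avoids q1
    have safeGen : ∀ (y : SV k len) (qlo qhi : ℕ), (qhi < q1 ∨ q1 < qlo) →
        (2*ℓ+1)*qlo ≤ mu ℓ k len y → mu ℓ k len y ≤ (2*ℓ+1)*qhi →
        2*ℓ+1 ≤ hgt ℓ k len y →
        ∀ x ∈ X, ¬∃ w : (G k hk len).Walk x y, w.length ≤ ℓ := by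
      intro y qlo qhi hq hlo hhi hgty x hx
      rcases hXeq x hx with rfl | rfl
      · exact no_short_walk hk hdepth hlen (Or.inl ⟨hgty, by omega⟩)
      · apply no_short_walk hk hdepth hlen
        right
        refine ⟨by omega, Or.inr ?_⟩
        rcases hq with h | h
        · left
          have := mul_succ_le (2*ℓ+1) h
          omega
        · right
          have := mul_succ_le (2*ℓ+1) h
          omega
    -- safety of M vertices
    have safeM : ∀ q : ℕ, q ≤ 2^(k-1)+1 → q ≠ q1 →
        ∀ x ∈ X, ¬∃ w : (G k hk len).Walk x (Sum.inl (mnode k hk q)), w.length ≤ ℓ := by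
      intro q hqN hq x hx
      have hmu := mu_mnode ℓ k hk len q hqN
      refine safeGen _ q q (by omega) (by omega) (by omega) ?_ x hx
      rw [hgt_mnode]
      omega
    -- safety of interior vertices of M edges
    have safeI : ∀ (i : Fin (2^(k-1)+1)) (t : Fin (len (Sum.inr i) - 1)),
        ((i:ℕ)+1 < q1 ∨ q1 < (i:ℕ)) →
        ∀ x ∈ X, ¬∃ w : (G k hk len).Walk x (Sum.inr ⟨Sum.inr i, t⟩), w.length ≤ ℓ := by
      intro i t hi x hx
      have hmu : mu ℓ k len (Sum.inr ⟨Sum.inr i, t⟩)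
          = (2*ℓ+1) * (i:ℕ) + min ((t:ℕ)+1) (2*ℓ+1) := rfl
      have hmul : (2*ℓ+1) * ((i:ℕ)+1) = (2*ℓ+1) * (i:ℕ) + (2*ℓ+1) := by ring
      refine safeGen _ (i:ℕ) ((i:ℕ)+1) (by omega) (by omega) (by omega) ?_ x hx
      show 2*ℓ+1 ≤ D ℓ k
      omega
    -- dispatch on the location of q1
    rcases Nat.eq_zero_or_pos q1 with hq10 | hq1pos
    · -- q1 = 0 : go along M from position 1
      subst hq10
      obtain ⟨w0, hw0⟩ : ∃ w0 : (G k hk len).Walk (Sum.inl (mnode k hk 1))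
          (Sum.inl (mnode k hk (2^(k-1)+1))),
          ∀ y ∈ w0.support,
            (∃ q : ℕ, 1 ≤ q ∧ q ≤ 2^(k-1)+1 ∧ y = Sum.inl (mnode k hk q)) ∨
            (∃ (i : Fin (2^(k-1)+1)) (t : Fin (len (Sum.inr i) - 1)),
              1 ≤ (i:ℕ) ∧ y = Sum.inr ⟨Sum.inr i, t⟩) := by
        refine ⟨(mseg hk hlen2 (2^(k-1)) 1 (by omega)).copy rfl
          (by rw [show 1 + 2^(k-1) = 2^(k-1)+1 from by omega]), ?_⟩
        intro y hy
        rw [SimpleGraph.Walk.support_copy] at hy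
        rcases mseg_support hk hlen2 _ _ _ y hy with ⟨q, h1, h2, rfl⟩ | ⟨i, t, h1, h2, rfl⟩
        · exact Or.inl ⟨q, h1, by omega, rfl⟩
        · exact Or.inr ⟨i, t, h1, rfl⟩
      refine ⟨Sum.inl (mnode k hk 1), Sum.inl (mnode k hk (2^(k-1)+1)), w0.bypass,
        SimpleGraph.Walk.bypass_isPath w0,
        Set.mem_insert_iff.mpr (Or.inr (Set.mem_insert_iff.mpr (Or.inr rfl))),
        Set.mem_insert_iff.mpr (Or.inr (Set.mem_insert_iff.mpr (Or.inr rfl))), ?_⟩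
      intro x hx y hy
      rcases hw0 y (SimpleGraph.Walk.support_bypass_subset w0 hy) with
        ⟨q, hq1', hq2, rfl⟩ | ⟨i, t, hi1, rfl⟩
      · exact safeM q (by omega) (by omega) x hx
      · exact safeI i t (by omega) x hx
    rcases Nat.lt_or_ge q1 (2^(k-1)+1) with hq1top | hq1top
    · -- 1 ≤ q1 ≤ 2^(k-1) : cross the tree at parent p
      set p := (q1 - 1) / 2 with hpdef
      have hpa : 2*p ≤ q1 - 1 := by omega
      have hpb : q1 ≤ 2*p + 2 := by omega
      have hp : p < 2 ^ (k-2) := by omega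
      have hble : 2*p + 3 ≤ 2^(k-1)+1 := by omega
      obtain ⟨w0, hw0⟩ : ∃ w0 : (G k hk len).Walk (Sum.inl (mnode k hk 0))
          (Sum.inl (mnode k hk (2^(k-1)+1))),
          ∀ y ∈ w0.support,
            (∃ q : ℕ, q ≤ 2^(k-1)+1 ∧ (q ≤ 2*p ∨ 2*p+3 ≤ q) ∧ y = Sum.inl (mnode k hk q)) ∨
            (∃ (i : Fin (2^(k-1)+1)) (t : Fin (len (Sum.inr i) - 1)),
              ((i:ℕ) < 2*p ∨ 2*p+3 ≤ (i:ℕ)) ∧ y = Sum.inr ⟨Sum.inr i, t⟩) ∨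
            y = Sum.inl (ep k hk (Sum.inl (leafL k hk p))).1 ∨
            (∃ t, y = Sum.inr ⟨Sum.inl (leafL k hk p), t⟩) ∨
            (∃ t, y = Sum.inr ⟨Sum.inl (leafR k hk p), t⟩) := by
        refine ⟨((mseg hk hlen2 (2*p) 0 (by omega)).copy rfl (by rw [Nat.zero_add])).append
          ((crossW k hk hlen2 p hp).append
            ((mseg hk hlen2 ((2^(k-1)+1) - (2*p+3)) (2*p+3) (by omega)).copy rfl
              (by rw [show 2*p+3 + ((2^(k-1)+1) - (2*p+3)) = 2^(k-1)+1 from by omega]))), ?_⟩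
        intro y hy
        rw [SimpleGraph.Walk.mem_support_append_iff,
          SimpleGraph.Walk.mem_support_append_iff,
          SimpleGraph.Walk.support_copy, SimpleGraph.Walk.support_copy] at hy
        rcases hy with hy | hy | hy
        · rcases mseg_support hk hlen2 _ _ _ y hy with ⟨q, hqa, hqb, rfl⟩ | ⟨i, t, hi1, hi2, rfl⟩
          · exact Or.inl ⟨q, by omega, by omega, rfl⟩
          · exact Or.inr (Or.inl ⟨i, t, by omega, rfl⟩)
        · rcases crossW_support k hk hlen2 p hp y hy with h' | h' | h' | ⟨t, h'⟩ | ⟨t, h'⟩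
          · exact Or.inr (Or.inr (Or.inl h'))
          · exact Or.inl ⟨2*p, by omega, by omega, h'⟩
          · exact Or.inl ⟨2*p+3, by omega, by omega, h'⟩
          · exact Or.inr (Or.inr (Or.inr (Or.inl ⟨t, h'⟩)))
          · exact Or.inr (Or.inr (Or.inr (Or.inr ⟨t, h'⟩)))
        · rcases mseg_support hk hlen2 _ _ _ y hy with ⟨q, hqa, hqb, rfl⟩ | ⟨i, t, hi1, hi2, rfl⟩
          · exact Or.inl ⟨q, by omega, by omega, rfl⟩
          · exact Or.inr (Or.inl ⟨i, t, by omega, rfl⟩)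
      refine ⟨Sum.inl (mnode k hk 0), Sum.inl (mnode k hk (2^(k-1)+1)), w0.bypass,
        SimpleGraph.Walk.bypass_isPath w0,
        Set.mem_insert_iff.mpr (Or.inr (Set.mem_insert _ _)),
        Set.mem_insert_iff.mpr (Or.inr (Set.mem_insert_iff.mpr (Or.inr rfl))), ?_⟩
      intro x hx y hy
      rcases hw0 y (SimpleGraph.Walk.support_bypass_subset w0 hy) with
        ⟨q, hqa, hqb, rfl⟩ | ⟨i, t, hi1, rfl⟩ | h' | ⟨t, h'⟩ | ⟨t, h'⟩
      · exact safeM q (by omega) (by omega) x hx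
      · exact safeI i t (by omega) x hx
      · -- the parent vertex
        subst h'
        rcases hXeq x hx with rfl | rfl
        · exact no_short_walk hk hdepth hlen (Or.inl ⟨by rw [hgt_parent]; omega, by omega⟩)
        · exact no_short_walk hk hdepth hlen
            (Or.inr ⟨by omega, Or.inl (by rw [hgt_parent]; omega)⟩)
      · -- pendant chain of the left leaf
        subst h'
        have hmu : mu ℓ k len (Sum.inr ⟨Sum.inl (leafL k hk p), t⟩)
            = (2*ℓ+1) * (2*p) := by
          show (2*ℓ+1) * posL (bits (k-2) p ++ [false]) = _
          rw [posL_bits_false hp]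
        refine safeGen _ (2*p) (2*p) (by omega) (by omega) (by omega) ?_ x hx
        show 2*ℓ+1 ≤ min (k - 2 + 1 + (t:ℕ)) (D ℓ k)
        omega
      · -- pendant chain of the right leaf
        subst h'
        have hmu : mu ℓ k len (Sum.inr ⟨Sum.inl (leafR k hk p), t⟩)
            = (2*ℓ+1) * (2*p+3) := by
          show (2*ℓ+1) * posL (bits (k-2) p ++ [true]) = _
          rw [posL_bits_true hp]
        refine safeGen _ (2*p+3) (2*p+3) (by omega) (by omega) (by omega) ?_ x hx
        show 2*ℓ+1 ≤ min (k - 2 + 1 + (t:ℕ)) (D ℓ k)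
        omega
    · -- q1 = 2^(k-1)+1 : go along M up to position 2^(k-1)
      have hq1eq : q1 = 2^(k-1)+1 := by omega
      subst hq1eq
      obtain ⟨w0, hw0⟩ : ∃ w0 : (G k hk len).Walk (Sum.inl (mnode k hk 0))
          (Sum.inl (mnode k hk (2^(k-1)))),
          ∀ y ∈ w0.support,
            (∃ q : ℕ, q ≤ 2^(k-1) ∧ y = Sum.inl (mnode k hk q)) ∨
            (∃ (i : Fin (2^(k-1)+1)) (t : Fin (len (Sum.inr i) - 1)),
              (i:ℕ) < 2^(k-1) ∧ y = Sum.inr ⟨Sum.inr i, t⟩) := by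
        refine ⟨(mseg hk hlen2 (2^(k-1)) 0 (by omega)).copy rfl (by rw [Nat.zero_add]), ?_⟩
        intro y hy
        rw [SimpleGraph.Walk.support_copy] at hy
        rcases mseg_support hk hlen2 _ _ _ y hy with ⟨q, h1, h2, rfl⟩ | ⟨i, t, h1, h2, rfl⟩
        · exact Or.inl ⟨q, by omega, rfl⟩
        · exact Or.inr ⟨i, t, by omega, rfl⟩
      refine ⟨Sum.inl (mnode k hk 0), Sum.inl (mnode k hk (2^(k-1))), w0.bypass,
        SimpleGraph.Walk.bypass_isPath w0,
        Set.mem_insert_iff.mpr (Or.inr (Set.mem_insert _ _)),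
        Set.mem_insert_iff.mpr (Or.inr (Set.mem_insert _ _)), ?_⟩
      intro x hx y hy
      rcases hw0 y (SimpleGraph.Walk.support_bypass_subset w0 hy) with
        ⟨q, hqa, rfl⟩ | ⟨i, t, hi1, rfl⟩
      · exact safeM q (by omega) (by omega) x hx
      · exact safeI i t (by omega) x hx


/-- Theorem 2.1: in the graph of Figure 1 (tree of depth `k > 2ℓ + 2`, each edge incident
with `Z` subdivided into a path of length `len e > 2ℓ`), for every set `X` of at most two
vertices there is a path `P` between `S` and `T` with `d(X, P) > ℓ`. -/
theorem stmt_9 (ℓ k : ℕ) (hl : 1 ≤ ℓ) (hdepth : 2 * ℓ + 2 < k) (hk : 2 ≤ k)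
    (len : E k → ℕ) (hlen : ∀ e, 2 * ℓ < len e) :
    ∀ X : Finset (SV k len), X.card ≤ 2 →
      ∃ (u v : SV k len) (p : (G k hk len).Walk u v), p.IsPath ∧
        u ∈ S k hk len ∧ v ∈ T k hk len ∧
        ∀ x ∈ X, ∀ y ∈ p.support, ¬ ∃ w : (G k hk len).Walk x y, w.length ≤ ℓ := by
  exact stmt_9' ℓ k hl hdepth hk len hlen

end CoarseMenger9
end
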